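/- Let I = (G, L) be an SMP instance such that some sequence of k swaps transforms L into preference lists L' for which G admits a perfect stable matching. Then for every stable matching M of (G, L), the number of vertices of G left unmatched by M is at most 2k. -/

import Mathlib

/-!
Let `M'` be the perfect stable matching for `L'` and `a₀` an `α`-vertex left unmatched by `M`.
Follow the alternating path `a₀ → b₀ = M'(a₀) → a₁ = M(b₀) → b₁ = M'(a₁) → ⋯`, along which every
`aᵢ` prefers `bᵢ` to its `M`-partner under `L` (vacuously for `a₀`). Stability of `M` makes `bᵢ`
matched under `M` to some `aᵢ₊₁` it prefers to `aᵢ` under `L`; stability of `M'` then forces either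
an inversion between `L` and `L'` at `bᵢ` (on the pair `aᵢ, aᵢ₊₁`) or at `aᵢ₊₁` (on `bᵢ, bᵢ₊₁`),
or `aᵢ₊₁` to prefer `bᵢ₊₁` to `bᵢ` under `L` as well, so that the path continues. It cannot close
up, since `a₀` has no `M`-partner, so by finiteness it reaches an inversion. Paths from distinct
unmatched vertices are disjoint, hence reach distinct inversions; a swap creates at most one
inversion, so each side has at most `k` unmatched vertices.
-/

/-- Preference lists: for each vertex on side `α` a list of neighbors in `β`,
and vice versa (most preferred first). -/
structure Prefs (α β : Type*) where
  fA : α → List β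
  fB : β → List α

/-- `l'` is obtained from `l` by one adjacent transposition (swap). -/
def AdjSwap {γ : Type*} (l l' : List γ) : Prop :=
  ∃ (p s : List γ) (x y : γ), l = p ++ x :: y :: s ∧ l' = p ++ y :: x :: s

/-- One swap applied to a set of preference lists: exactly one list changes,
by one adjacent transposition. -/
def SwapStep {α β : Type*} (L L' : Prefs α β) : Prop :=
  (∃ a, AdjSwap (L.fA a) (L'.fA a) ∧ (∀ a', a' ≠ a → L'.fA a' = L.fA a') ∧
      (∀ b, L'.fB b = L.fB b)) ∨
  (∃ b, AdjSwap (L.fB b) (L'.fB b) ∧ (∀ b', b' ≠ b → L'.fB b' = L.fB b') ∧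
      (∀ a, L'.fA a = L.fA a))

/-- `SwapSeq k L L'` : `L'` is obtained from `L` by a sequence of `k` swaps. -/
def SwapSeq {α β : Type*} : ℕ → Prefs α β → Prefs α β → Prop
  | 0, L, L' => L' = L
  | k + 1, L, L' => ∃ L'', SwapStep L L'' ∧ SwapSeq k L'' L'

/-- The preference lists are valid for the bipartite graph with edge set `E`:
each list is duplicate-free and consists exactly of the neighbors. -/
def ValidPrefs {α β : Type*} (E : Finset (α × β)) (L : Prefs α β) : Prop :=
  (∀ a, (L.fA a).Nodup) ∧ (∀ b, (L.fB b).Nodup) ∧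
  (∀ a b, b ∈ L.fA a ↔ (a, b) ∈ E) ∧ (∀ a b, a ∈ L.fB b ↔ (a, b) ∈ E)

/-- In the list `l`, `x` is preferred to `y` (occurs strictly earlier). -/
def PrefersIn {γ : Type*} [DecidableEq γ] (l : List γ) (x y : γ) : Prop :=
  x ∈ l ∧ l.idxOf x < l.idxOf y

/-- `M` is a matching of the bipartite graph with edge set `E`. -/
def IsMatching {α β : Type*} (E M : Finset (α × β)) : Prop :=
  M ⊆ E ∧ ∀ e ∈ M, ∀ e' ∈ M, (e.1 = e'.1 ∨ e.2 = e'.2) → e = e'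

/-- `e` is a blocking edge of the matching `M` w.r.t. preference lists `L`. -/
def Blocking {α β : Type*} [DecidableEq α] [DecidableEq β]
    (E : Finset (α × β)) (L : Prefs α β) (M : Finset (α × β)) (e : α × β) : Prop :=
  e ∈ E ∧ e ∉ M ∧
  ((∀ b, (e.1, b) ∉ M) ∨ ∃ b, (e.1, b) ∈ M ∧ PrefersIn (L.fA e.1) e.2 b) ∧
  ((∀ a, (a, e.2) ∉ M) ∨ ∃ a, (a, e.2) ∈ M ∧ PrefersIn (L.fB e.2) e.1 a)

/-- `M` is a stable matching w.r.t. preference lists `L`. -/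
def StableM {α β : Type*} [DecidableEq α] [DecidableEq β]
    (E : Finset (α × β)) (L : Prefs α β) (M : Finset (α × β)) : Prop :=
  ∀ e, ¬ Blocking E L M e

open Finset

section Lists

variable {γ : Type*} [DecidableEq γ] {l : List γ} {x y : γ}

instance (l : List γ) (x y : γ) : Decidable (PrefersIn l x y) :=
  inferInstanceAs (Decidable (_ ∧ _))

lemma PrefersIn.not_prefersIn (h : PrefersIn l x y) : ¬PrefersIn l y x :=
  fun h' => (h.2.trans h'.2).false

lemma PrefersIn.ne (h : PrefersIn l x y) : x ≠ y := by
  rintro rfl; exact h.not_prefersIn h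

lemma prefersIn_of_not_prefersIn (hx : x ∈ l) (hy : y ∈ l) (hxy : x ≠ y)
    (h : ¬PrefersIn l x y) : PrefersIn l y x := by
  refine ⟨hy, lt_of_le_of_ne (not_lt.1 fun hlt => h ⟨hx, hlt⟩) fun heq => hxy ?_⟩
  exact ((List.idxOf_inj hy).1 heq).symm

lemma idxOf_append_cons_cons_swap {p s : List γ} (hxy : x ≠ y) (z : γ) :
    (p ++ y :: x :: s).idxOf z =
      if (p ++ x :: y :: s).idxOf z = p.length then p.length + 1
      else if (p ++ x :: y :: s).idxOf z = p.length + 1 then p.length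
      else (p ++ x :: y :: s).idxOf z := by
  by_cases hz : z ∈ p
  · have := List.idxOf_lt_length_iff.2 hz
    simp [List.idxOf_append_of_mem hz, this.ne, (this.trans (Nat.lt_succ_self _)).ne]
  simp only [List.idxOf_append_of_notMem hz]
  by_cases hxz : x = z
  · subst hxz; simp [List.idxOf_cons_ne _ hxy.symm]
  by_cases hyz : y = z
  · subst hyz; simp [List.idxOf_cons_ne _ hxy]
  simp [List.idxOf_cons_ne _ hxz, List.idxOf_cons_ne _ hyz]

lemma AdjSwap.exists_prefersIn {l' : List γ} (h : AdjSwap l l') (hnd : l.Nodup) :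
    ∃ x y, ∀ u v, PrefersIn l u v → (u, v) ≠ (x, y) → PrefersIn l' u v := by
  obtain ⟨p, s, x, y, rfl, rfl⟩ := h
  have hxy : x ≠ y := by
    rintro rfl; simp [List.nodup_append] at hnd
  refine ⟨x, y, fun u v ⟨hu, huv⟩ hne => ⟨by simp_all [or_left_comm], ?_⟩⟩
  have getElem_of_idxOf {z : γ} {i : ℕ} (hi : i < (p ++ x :: y :: s).length)
      (hz : (p ++ x :: y :: s).idxOf z = i) : (p ++ x :: y :: s)[i] = z := by
    subst hz; exact List.getElem_idxOf hi
  by_cases hpos : (p ++ x :: y :: s).idxOf u = p.length ∧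
      (p ++ x :: y :: s).idxOf v = p.length + 1
  · have hux := getElem_of_idxOf (by simp) hpos.1
    have hvy := getElem_of_idxOf (by simp) hpos.2
    simp_all
  rw [idxOf_append_cons_cons_swap hxy, idxOf_append_cons_cons_swap hxy]
  split_ifs <;> omega

end Lists

namespace Prefs

variable {α β : Type*}

abbrev swap (L : Prefs α β) : Prefs β α := ⟨L.fB, L.fA⟩

protected def Perm (L L' : Prefs α β) : Prop :=
  (∀ a, (L.fA a).Perm (L'.fA a)) ∧ ∀ b, (L.fB b).Perm (L'.fB b)

protected def Nodup (L : Prefs α β) : Prop :=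
  (∀ a, (L.fA a).Nodup) ∧ ∀ b, (L.fB b).Nodup

lemma Perm.refl (L : Prefs α β) : L.Perm L :=
  ⟨fun _ => List.Perm.refl _, fun _ => List.Perm.refl _⟩

lemma Perm.trans {L₁ L₂ L₃ : Prefs α β} (h₁ : L₁.Perm L₂) (h₂ : L₂.Perm L₃) : L₁.Perm L₃ :=
  ⟨fun a => (h₁.1 a).trans (h₂.1 a), fun b => (h₁.2 b).trans (h₂.2 b)⟩

lemma Nodup.of_perm {L L' : Prefs α β} (hL : L.Nodup) (h : L.Perm L') : L'.Nodup :=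
  ⟨fun a => (h.1 a).nodup_iff.1 (hL.1 a), fun b => (h.2 b).nodup_iff.1 (hL.2 b)⟩

end Prefs

lemma ValidPrefs.nodup {α β : Type*} {E : Finset (α × β)} {L : Prefs α β}
    (hL : ValidPrefs E L) : L.Nodup :=
  ⟨hL.1, hL.2.1⟩

lemma ValidPrefs.of_perm {α β : Type*} {E : Finset (α × β)} {L L' : Prefs α β}
    (hL : ValidPrefs E L) (h : L.Perm L') : ValidPrefs E L' :=
  ⟨(hL.nodup.of_perm h).1, (hL.nodup.of_perm h).2,
    fun a b => (h.1 a).mem_iff.symm.trans (hL.2.2.1 a b),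
    fun a b => (h.2 b).mem_iff.symm.trans (hL.2.2.2 a b)⟩

section Swaps

variable {α β : Type*}

lemma AdjSwap.perm {γ : Type*} {l l' : List γ} (h : AdjSwap l l') : l.Perm l' := by
  obtain ⟨p, s, x, y, rfl, rfl⟩ := h
  exact (List.Perm.swap y x s).append_left p

lemma SwapStep.perm {L L' : Prefs α β} (h : SwapStep L L') : L.Perm L' := by
  rcases h with ⟨a, hsw, hA, hB⟩ | ⟨b, hsw, hB, hA⟩
  · refine ⟨fun a' => ?_, fun b => (hB b).symm ▸ List.Perm.refl _⟩
    by_cases ha : a' = a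
    · exact ha ▸ hsw.perm
    · exact (hA a' ha).symm ▸ List.Perm.refl _
  · refine ⟨fun a => (hA a).symm ▸ List.Perm.refl _, fun b' => ?_⟩
    by_cases hb : b' = b
    · exact hb ▸ hsw.perm
    · exact (hB b' hb).symm ▸ List.Perm.refl _

lemma SwapSeq.perm {k : ℕ} {L L' : Prefs α β} (h : SwapSeq k L L') : L.Perm L' := by
  induction k generalizing L with
  | zero => exact h ▸ Prefs.Perm.refl L
  | succ k ih =>
    obtain ⟨L'', hstep, hseq⟩ := h
    exact hstep.perm.trans (ih hseq)

end Swaps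

section Inversions

variable {α β : Type*} [Fintype α] [Fintype β] [DecidableEq β]

def inversionsA (L L' : Prefs α β) : Finset (α × β × β) :=
  {t | PrefersIn (L.fA t.1) t.2.1 t.2.2 ∧ PrefersIn (L'.fA t.1) t.2.2 t.2.1}

lemma inversionsA_self (L : Prefs α β) : inversionsA L L = ∅ :=
  filter_false_of_mem fun _ _ h => h.1.not_prefersIn h.2

lemma inversionsA_congr {L₁ L₂ L' : Prefs α β} (h : ∀ a, L₂.fA a = L₁.fA a) :
    inversionsA L₁ L' = inversionsA L₂ L' := by
  simp only [inversionsA, h]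

variable [DecidableEq α]

def inversionsB (L L' : Prefs α β) : Finset (β × α × α) :=
  inversionsA L.swap L'.swap

lemma card_inversionsA_le_of_adjSwap {L L'' L' : Prefs α β} {a : α}
    (hsw : AdjSwap (L.fA a) (L''.fA a)) (hnd : (L.fA a).Nodup)
    (hA : ∀ a', a' ≠ a → L''.fA a' = L.fA a') :
    #(inversionsA L L') ≤ #(inversionsA L'' L') + 1 := by
  obtain ⟨x, y, hxy⟩ := hsw.exists_prefersIn hnd
  have hsub : inversionsA L L' ⊆ insert (a, x, y) (inversionsA L'' L') := by
    rintro ⟨a', u, v⟩ ht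
    simp only [inversionsA, mem_insert, mem_filter, mem_univ,
      true_and, Prod.mk.injEq] at ht ⊢
    by_cases ha : a' = a
    · subst ha
      by_cases huv : (u, v) = (x, y)
      · simp_all
      · exact Or.inr ⟨hxy u v ht.1 huv, ht.2⟩
    · exact Or.inr ⟨hA a' ha ▸ ht.1, ht.2⟩
  exact (card_le_card hsub).trans (card_insert_le _ _)

lemma card_inversions_le_of_swapStep {L L'' L' : Prefs α β} (hstep : SwapStep L L'')
    (hnd : L.Nodup) :
    #(inversionsA L L') + #(inversionsB L L') ≤
      #(inversionsA L'' L') + #(inversionsB L'' L') + 1 := by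
  rcases hstep with ⟨a, hsw, hA, hB⟩ | ⟨b, hsw, hB, hA⟩
  · have := card_inversionsA_le_of_adjSwap (L' := L') hsw (hnd.1 a) hA
    rw [inversionsB, inversionsB, inversionsA_congr (L₂ := L''.swap) hB]
    omega
  · have := card_inversionsA_le_of_adjSwap (L := L.swap) (L'' := L''.swap) (L' := L'.swap)
      hsw (hnd.2 b) hB
    rw [inversionsB, inversionsB, inversionsA_congr (L₂ := L'') hA]
    omega

lemma card_inversions_le_of_swapSeq {k : ℕ} {L L' : Prefs α β} (hseq : SwapSeq k L L')
    (hnd : L.Nodup) : #(inversionsA L L') + #(inversionsB L L') ≤ k := by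
  induction k generalizing L with
  | zero => subst hseq; simp [inversionsB, inversionsA_self]
  | succ k ih =>
    obtain ⟨L'', hstep, hseq⟩ := hseq
    have := ih hseq (hnd.of_perm hstep.perm)
    have := card_inversions_le_of_swapStep (L' := L') hstep hnd
    omega

end Inversions

lemma Relation.ReflTransGen.eq_of_leftUnique {α : Type*} {r : α → α → Prop}
    (hr : Relator.LeftUnique r) {a a' x : α} (h : Relation.ReflTransGen r a x)
    (h' : Relation.ReflTransGen r a' x) (ha : ∀ u, ¬r u a) (ha' : ∀ u, ¬r u a') : a = a' := by
  have hr' : Relator.RightUnique (Function.swap r) := fun _ _ _ h₁ h₂ => hr h₁ h₂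
  have of_swap {c c' : α} (h : Relation.ReflTransGen (Function.swap r) c c')
      (hc : ∀ u, ¬r u c) : c = c' :=
    (Relation.ReflTransGen.cases_head h).elim id fun ⟨d, hd, _⟩ => (hc d hd).elim
  rw [← Relation.reflTransGen_swap] at h h'
  rcases Relation.ReflTransGen.total_of_right_unique hr' h h' with h | h
  · exact of_swap h ha
  · exact (of_swap h ha').symm

lemma exists_pred_of_forall_exists_succ {α : Type*} [Finite α] {r : α → α → Prop}
    (hr : Relator.LeftUnique r) {P : α → Prop} (hstep : ∀ a, P a → ∃ b, r a b ∧ P b)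
    {a : α} (ha : P a) : ∃ u, r u a := by
  choose! f hf using hstep
  have hmaps : Set.MapsTo f P P := fun u hu => (hf u hu).2
  have hinj : Set.InjOn f P := fun u hu v hv huv => hr (hf u hu).1 (huv ▸ (hf v hv).1)
  obtain ⟨u, hu, rfl⟩ := ((Set.toFinite P).injOn_iff_bijOn_of_mapsTo hmaps).1 hinj |>.surjOn ha
  exact ⟨u, (hf u hu).1⟩

section Matchings

variable {α β : Type*} {E M : Finset (α × β)} {a a' : α} {b b' : β}

lemma IsMatching.snd_eq (hM : IsMatching E M) (h : (a, b) ∈ M) (h' : (a, b') ∈ M) : b = b' :=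
  congrArg Prod.snd (hM.2 _ h _ h' (Or.inl rfl))

lemma IsMatching.fst_eq (hM : IsMatching E M) (h : (a, b) ∈ M) (h' : (a', b) ∈ M) : a = a' :=
  congrArg Prod.fst (hM.2 _ h _ h' (Or.inr rfl))

lemma ValidPrefs.prefersIn_fA_of_not_prefersIn [DecidableEq β] {L : Prefs α β}
    (hL : ValidPrefs E L) (h : (a, b) ∈ E)
    (h' : (a, b') ∈ E) (hne : b ≠ b') (hn : ¬PrefersIn (L.fA a) b b') :
    PrefersIn (L.fA a) b' b :=
  prefersIn_of_not_prefersIn ((hL.2.2.1 _ _).2 h) ((hL.2.2.1 _ _).2 h') hne hn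

lemma ValidPrefs.prefersIn_fB_of_not_prefersIn [DecidableEq α] {L : Prefs α β}
    (hL : ValidPrefs E L) (h : (a, b) ∈ E)
    (h' : (a', b) ∈ E) (hne : a ≠ a') (hn : ¬PrefersIn (L.fB b) a a') :
    PrefersIn (L.fB b) a' a :=
  prefersIn_of_not_prefersIn ((hL.2.2.2 _ _).2 h) ((hL.2.2.2 _ _).2 h') hne hn

variable [DecidableEq α] [DecidableEq β] {L : Prefs α β}

@[simp]
lemma swap_mem_image_swap {s : Finset (α × β)} : (b, a) ∈ s.image Prod.swap ↔ (a, b) ∈ s :=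
  Prod.swap_injective.mem_finset_image (a := (a, b))

lemma ValidPrefs.swap (hL : ValidPrefs E L) : ValidPrefs (E.image Prod.swap) L.swap :=
  ⟨hL.2.1, hL.1, fun b a => by simp [hL.2.2.2], fun b a => by simp [hL.2.2.1]⟩

lemma IsMatching.swap (hM : IsMatching E M) :
    IsMatching (E.image Prod.swap) (M.image Prod.swap) := by
  refine ⟨image_subset_image hM.1, ?_⟩
  simp only [mem_image]
  rintro _ ⟨e, he, rfl⟩ _ ⟨e', he', rfl⟩ h
  rw [hM.2 e he e' he' h.symm]

lemma StableM.swap (hst : StableM E L M) :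
    StableM (E.image Prod.swap) L.swap (M.image Prod.swap) := by
  rintro ⟨b, a⟩ ⟨he, hne, hb, ha⟩
  exact hst (a, b) ⟨by simpa using he, by simpa using hne, by simpa using ha, by simpa using hb⟩

lemma StableM.not_prefersIn_and_prefersIn (hst : StableM E L M) (he : (a, b) ∈ E)
    (hne : (a, b) ∉ M) (ha : ∀ b', (a, b') ∈ M → PrefersIn (L.fA a) b b')
    (hb : ∀ a', (a', b) ∈ M → PrefersIn (L.fB b) a a') : False := by
  refine hst (a, b) ⟨he, hne, ?_, ?_⟩
  · by_cases h : ∃ b', (a, b') ∈ M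
    · obtain ⟨b', h⟩ := h
      exact Or.inr ⟨b', h, ha b' h⟩
    · exact Or.inl (not_exists.1 h)
  · by_cases h : ∃ a', (a', b) ∈ M
    · obtain ⟨a', h⟩ := h
      exact Or.inr ⟨a', h, hb a' h⟩
    · exact Or.inl (not_exists.1 h)

lemma StableM.exists_snd_partner (hst : StableM E L M) (he : (a, b) ∈ E) (hne : (a, b) ∉ M)
    (ha : ∀ b', (a, b') ∈ M → PrefersIn (L.fA a) b b') :
    ∃ a', (a', b) ∈ M ∧ ¬PrefersIn (L.fB b) a a' := by
  by_contra! hb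
  exact hst.not_prefersIn_and_prefersIn he hne ha hb

lemma StableM.exists_fst_partner (hst : StableM E L M) (he : (a, b) ∈ E) (hne : (a, b) ∉ M)
    (hb : ∀ a', (a', b) ∈ M → PrefersIn (L.fB b) a a') :
    ∃ b', (a, b') ∈ M ∧ ¬PrefersIn (L.fA a) b b' := by
  by_contra! ha
  exact hst.not_prefersIn_and_prefersIn he hne ha hb

end Matchings

section Exchange

variable {α β : Type*} {E M M' : Finset (α × β)}

/-- An inversion is charged to the alternating path through the `M'`-edge at this vertex. -/
def inversionPivot : (α × β × β) ⊕ (β × α × α) → β :=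
  Sum.elim (fun t => t.2.1) Prod.fst

def AltStep (M' M : Finset (α × β)) (u v : α) : Prop :=
  ∃ b, (u, b) ∈ M' ∧ (v, b) ∈ M

lemma altStep_leftUnique (hM : IsMatching E M) (hM' : IsMatching E M') :
    Relator.LeftUnique (AltStep M' M) := by
  rintro u v w ⟨b, hub, hwb⟩ ⟨b', hvb, hwb'⟩
  obtain rfl := hM.snd_eq hwb hwb'
  exact hM'.fst_eq hub hvb

def PrefersNewPartner [DecidableEq β] (L : Prefs α β) (M M' : Finset (α × β)) (a : α) : Prop :=
  ∀ b b', (a, b) ∈ M → (a, b') ∈ M' → PrefersIn (L.fA a) b' b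

variable [Fintype α] [Fintype β] [DecidableEq α] [DecidableEq β] {L L' : Prefs α β}

lemma exists_inversion_or_altStep (hL : ValidPrefs E L) (hL' : ValidPrefs E L') (hM : IsMatching E M)
    (hst : StableM E L M) (hM' : IsMatching E M') (hst' : StableM E L' M') {a : α} {b : β}
    (hab : (a, b) ∈ M') (ha : PrefersNewPartner L M M' a) :
    (∃ T ∈ (inversionsA L L').disjSum (inversionsB L L'), inversionPivot T = b) ∨
      ∃ a₁, AltStep M' M a a₁ ∧ PrefersNewPartner L M M' a₁ := by
  have habE := hM'.1 hab
  have habM : (a, b) ∉ M := fun h => (ha b b h hab).ne rfl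
  obtain ⟨a₁, ha₁b, hna⟩ := hst.exists_snd_partner habE habM (fun b₀ h₀ => ha b₀ b h₀ hab)
  have ha₁E := hM.1 ha₁b
  have hne : a ≠ a₁ := by rintro rfl; exact habM ha₁b
  have hpref := hL.prefersIn_fB_of_not_prefersIn habE ha₁E hne hna
  by_cases hflipB : PrefersIn (L'.fB b) a a₁
  · exact Or.inl ⟨.inr (b, a₁, a), by simp [inversionsB, inversionsA, hpref, hflipB], rfl⟩
  have hpref' := hL'.prefersIn_fB_of_not_prefersIn habE ha₁E hne hflipB
  obtain ⟨b₂, ha₁b₂, hnb⟩ := hst'.exists_fst_partner ha₁E (fun h => hne (hM'.fst_eq hab h))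
    (fun a₀ h₀ => hM'.fst_eq hab h₀ ▸ hpref')
  have hbb₂ : b ≠ b₂ := by rintro rfl; exact hne (hM'.fst_eq hab ha₁b₂)
  have hpref₁' := hL'.prefersIn_fA_of_not_prefersIn ha₁E (hM'.1 ha₁b₂) hbb₂ hnb
  by_cases hflipA : PrefersIn (L.fA a₁) b b₂
  · exact Or.inl ⟨.inl (a₁, b, b₂), by simp [inversionsA, hflipA, hpref₁'], rfl⟩
  refine Or.inr ⟨a₁, ⟨b, hab, ha₁b⟩, fun c c' hc hc' => ?_⟩
  obtain rfl := hM.snd_eq ha₁b hc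
  obtain rfl := hM'.snd_eq ha₁b₂ hc'
  exact hL.prefersIn_fA_of_not_prefersIn ha₁E (hM'.1 ha₁b₂) hbb₂ hflipA

lemma exists_inversion_of_unmatched (hL : ValidPrefs E L) (hL' : ValidPrefs E L')
    (hM : IsMatching E M) (hst : StableM E L M) (hM' : IsMatching E M')
    (hM'A : ∀ a, ∃ b, (a, b) ∈ M') (hst' : StableM E L' M') {a₀ : α}
    (ha₀ : ∀ b, (a₀, b) ∉ M) :
    ∃ x, Relation.ReflTransGen (AltStep M' M) a₀ x ∧
      ∃ T ∈ (inversionsA L L').disjSum (inversionsB L L'), (x, inversionPivot T) ∈ M' := by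
  by_contra! hnone
  set P := fun a => Relation.ReflTransGen (AltStep M' M) a₀ a ∧ PrefersNewPartner L M M' a
  have hstep : ∀ a, P a → ∃ a₁, AltStep M' M a a₁ ∧ P a₁ := by
    rintro a ⟨hreach, ha⟩
    obtain ⟨b, hab⟩ := hM'A a
    rcases exists_inversion_or_altStep hL hL' hM hst hM' hst' hab ha with ⟨T, hT, rfl⟩ | ⟨a₁, hstep, ha₁⟩
    · exact (hnone a hreach T hT hab).elim
    · exact ⟨a₁, hstep, hreach.tail hstep, ha₁⟩
  obtain ⟨u, b, -, hb⟩ := exists_pred_of_forall_exists_succ (altStep_leftUnique hM hM') hstep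
    ⟨Relation.ReflTransGen.refl, fun b _ hb => (ha₀ b hb).elim⟩
  exact ha₀ b hb

lemma ncard_unmatched_le (hL : ValidPrefs E L) (hL' : ValidPrefs E L')
    (hM : IsMatching E M) (hst : StableM E L M) (hM' : IsMatching E M')
    (hM'A : ∀ a, ∃ b, (a, b) ∈ M') (hst' : StableM E L' M') :
    {a : α | ∀ b, (a, b) ∉ M}.ncard ≤ #(inversionsA L L') + #(inversionsB L L') := by
  rw [Set.ncard_eq_toFinset_card', ← card_disjSum]
  refine card_le_card_of_forall_subsingleton
    (fun a₀ T => ∃ x, Relation.ReflTransGen (AltStep M' M) a₀ x ∧ (x, inversionPivot T) ∈ M')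
    (fun a₀ ha₀ => ?_) (fun T _ a₀ ha₀ a₀' ha₀' => ?_)
  · obtain ⟨x, hx, T, hT, hxT⟩ :=
      exists_inversion_of_unmatched hL hL' hM hst hM' hM'A hst' (by simpa using ha₀)
    exact ⟨T, hT, x, hx, hxT⟩
  · obtain ⟨ha₀, x, hx, hxT⟩ := ha₀
    obtain ⟨ha₀', x', hx', hx'T⟩ := ha₀'
    obtain rfl := hM'.fst_eq hxT hx'T
    simp only [Set.mem_toFinset, Set.mem_ofPred_eq] at ha₀ ha₀'
    exact hx.eq_of_leftUnique (altStep_leftUnique hM hM') hx'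
      (fun _ ⟨b, _, hb⟩ => ha₀ b hb) (fun _ ⟨b, _, hb⟩ => ha₀' b hb)

end Exchange

/-- If some sequence of `k` swaps turns `L` into `L'` for which `G`
admits a perfect stable matching, then every stable matching of `(G, L)` leaves
at most `2k` vertices unmatched. -/
theorem unmatched_le_two_mul_swaps {α β : Type*} [Fintype α] [Fintype β]
    [DecidableEq α] [DecidableEq β]
    (E : Finset (α × β)) (L L' : Prefs α β) (k : ℕ)
    (hL : ValidPrefs E L)
    (hseq : SwapSeq k L L')
    (hperf : ∃ M' : Finset (α × β), IsMatching E M' ∧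
      (∀ a, ∃ b, (a, b) ∈ M') ∧ (∀ b, ∃ a, (a, b) ∈ M') ∧ StableM E L' M') :
    ∀ M : Finset (α × β), IsMatching E M → StableM E L M →
      {a : α | ∀ b, (a, b) ∉ M}.ncard + {b : β | ∀ a, (a, b) ∉ M}.ncard ≤ 2 * k := by
  obtain ⟨M', hM', hM'A, hM'B, hst'⟩ := hperf
  intro M hM hst
  have hL' := hL.of_perm hseq.perm
  have hk := card_inversions_le_of_swapSeq hseq hL.nodup
  have hA := ncard_unmatched_le hL hL' hM hst hM' hM'A hst'
  have hB := ncard_unmatched_le hL.swap hL'.swap hM.swap hst.swap hM'.swap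
    (fun b => (hM'B b).imp fun _ h => swap_mem_image_swap.2 h) hst'.swap
  simp only [swap_mem_image_swap] at hB
  change _ ≤ #(inversionsB L L') + #(inversionsA L L') at hB
  omega
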